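/- arXiv:2602.19660 — 3 statements merged into one kernel-verified Lean document; each statement's English description precedes it below -/
import Mathlib

section
/- For δ ∈ (0, 1/2), let P_δ be defined on [0,1] by P_δ(z) = 2 for z ∈ [0, 1/2], P_δ(z) = 1/(1−z) for z ∈ (1/2, 1−δ], and P_δ(z) = (z − 1 + δ)/δ² + 1/δ for z ∈ (1−δ, 1], and let G_δ(z) = ∫₀^z P_δ(u) du. Let x*_δ = δ − δ². Then for every M > 0 there exists δ ∈ (0, 1/2) such that G_δ(1)/2 − (G_δ(1 − x*_δ) + G_δ(x*_δ))/2 > 0 and G_δ(1)/2 − G_δ(1/2) > M · (G_δ(1)/2 − (G_δ(1 − x*_δ) + G_δ(x*_δ))/2). In particular, the Price of Anarchy is unbounded over convex price functions even for this step demand. -/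
/-
For `δ → 0` the steep middle piece `1/(1-z)` of the price makes the cost of serving
the peak grow like `log (1/(2δ))`, so the centralized gain `G(1)/2 - G(1/2)` equals
`log (1/(2δ))/2 + 1/4` and is unbounded. The decentralized battery only shifts
`x* = δ - δ²`, which keeps the on-peak demand `1 - x*` inside the last, linear piece of
the price: the expensive middle piece is never flattened, and the decentralized gain
is `3(1-δ)²/4 ≤ 3/4`.
-/

open intervalIntegral MeasureTheory

/-- The convex price function used to show unbounded Price of Anarchy:
`P_δ(z) = 2` on `[0,1/2]`, `1/(1−z)` on `(1/2, 1−δ]`, and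
`(z−1+δ)/δ² + 1/δ` on `(1−δ, 1]`. -/
noncomputable def Pdelta (δ : ℝ) : ℝ → ℝ := fun z =>
  if z ≤ 1 / 2 then 2
  else if z ≤ 1 - δ then 1 / (1 - z)
  else (z - 1 + δ) / δ ^ 2 + 1 / δ

/-- Generation cost `G_δ(z) = ∫₀^z P_δ(u) du`. -/
noncomputable def Gdelta (δ : ℝ) (z : ℝ) : ℝ := ∫ u in (0:ℝ)..z, Pdelta δ u

section

variable {δ : ℝ}

lemma Pdelta_of_le_half {z : ℝ} (hz : z ≤ 1 / 2) : Pdelta δ z = 2 := by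
  simp only [Pdelta, if_pos hz]

lemma Pdelta_of_half_lt_of_le {z : ℝ} (h₁ : 1 / 2 < z) (h₂ : z ≤ 1 - δ) :
    Pdelta δ z = (1 - z)⁻¹ := by
  simp only [Pdelta]
  rw [if_neg h₁.not_ge, if_pos h₂, one_div]

lemma Pdelta_of_one_sub_lt {z : ℝ} (hδ : δ ≤ 1 / 2) (hz : 1 - δ < z) :
    Pdelta δ z = (z - (1 - δ)) / δ ^ 2 + 1 / δ := by
  simp only [Pdelta, if_neg (by linarith : ¬ z ≤ 1 / 2), if_neg hz.not_ge]
  ring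

-- Stated on open intervals, so that the value of `Pdelta` at the break points never matters.
lemma eqOn_Pdelta_of_le_half {a : ℝ} (ha : a ≤ 1 / 2) :
    Set.EqOn (Pdelta δ) (fun _ => 2) (Set.uIoo 0 a) :=
  fun _ hz => Pdelta_of_le_half (hz.2.le.trans (max_le (by norm_num) ha))

lemma eqOn_Pdelta_middle (hδ : δ ≤ 1 / 2) :
    Set.EqOn (Pdelta δ) (fun z => (1 - z)⁻¹) (Set.uIoo (1 / 2) (1 - δ)) := by
  rw [Set.uIoo_of_le (by linarith)]
  exact fun _ hz => Pdelta_of_half_lt_of_le hz.1 hz.2.le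

lemma eqOn_Pdelta_right (hδ : δ ≤ 1 / 2) {t : ℝ} (ht : 1 - δ ≤ t) :
    Set.EqOn (Pdelta δ) (fun z => (z - (1 - δ)) / δ ^ 2 + 1 / δ) (Set.uIoo (1 - δ) t) := by
  rw [Set.uIoo_of_le ht]
  exact fun _ hz => Pdelta_of_one_sub_lt hδ hz.1

lemma Gdelta_of_le_half {a : ℝ} (ha : a ≤ 1 / 2) : Gdelta δ a = 2 * a := by
  simp [Gdelta, integral_congr_uIoo (eqOn_Pdelta_of_le_half ha), mul_comm]

lemma integral_Pdelta_middle (hδ₀ : 0 < δ) (hδ : δ ≤ 1 / 2) :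
    ∫ u in (1 / 2 : ℝ)..(1 - δ), Pdelta δ u = Real.log (1 / (2 * δ)) := by
  have hzero : (0 : ℝ) ∉ Set.uIcc (1 - (1 - δ)) (1 - 1 / 2) := by
    rw [sub_sub_cancel, Set.uIcc_of_le (by linarith)]
    exact fun h => hδ₀.not_ge h.1
  rw [integral_congr_uIoo (eqOn_Pdelta_middle hδ), integral_comp_sub_left (fun x => x⁻¹),
    integral_inv hzero]
  rw [sub_sub_cancel]
  congr 1
  ring

lemma integral_Pdelta_right (hδ : δ ≤ 1 / 2) {t : ℝ} (ht : 1 - δ ≤ t) :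
    ∫ u in (1 - δ)..t, Pdelta δ u = (t - (1 - δ)) ^ 2 / (2 * δ ^ 2) + (t - (1 - δ)) / δ := by
  rw [integral_congr_uIoo (eqOn_Pdelta_right hδ ht),
    integral_comp_sub_right (fun x => x / δ ^ 2 + 1 / δ), sub_self]
  simp [intervalIntegral.integral_add, intervalIntegral.integral_div]
  ring

lemma Gdelta_of_one_sub_le (hδ₀ : 0 < δ) (hδ : δ ≤ 1 / 2) {t : ℝ} (ht : 1 - δ ≤ t) :
    Gdelta δ t = 1 + Real.log (1 / (2 * δ)) + (t - (1 - δ)) ^ 2 / (2 * δ ^ 2)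
      + (t - (1 - δ)) / δ := by
  have hleft : IntervalIntegrable (Pdelta δ) volume 0 (1 / 2) :=
    (intervalIntegrable_congr_uIoo (eqOn_Pdelta_of_le_half le_rfl)).2 intervalIntegrable_const
  have hmiddle : IntervalIntegrable (Pdelta δ) volume (1 / 2) (1 - δ) := by
    rw [intervalIntegrable_congr_uIoo (eqOn_Pdelta_middle hδ)]
    refine (ContinuousOn.inv₀ (by fun_prop) fun x hx => ?_).intervalIntegrable
    rw [Set.uIcc_of_le (by linarith)] at hx
    linarith [hx.2]
  have hright : IntervalIntegrable (Pdelta δ) volume (1 - δ) t := by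
    rw [intervalIntegrable_congr_uIoo (eqOn_Pdelta_right hδ ht)]
    exact Continuous.intervalIntegrable (by fun_prop) _ _
  have hhalf : ∫ u in (0 : ℝ)..1 / 2, Pdelta δ u = 1 := by
    rw [← Gdelta, Gdelta_of_le_half le_rfl]
    norm_num
  rw [Gdelta, ← integral_add_adjacent_intervals (hleft.trans hmiddle) hright,
    ← integral_add_adjacent_intervals hleft hmiddle, hhalf, integral_Pdelta_middle hδ₀ hδ,
    integral_Pdelta_right hδ ht]
  ring

lemma Gdelta_decentralized_gain_eq (hδ₀ : 0 < δ) (hδ : δ ≤ 1 / 2) :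
    Gdelta δ 1 / 2 - (Gdelta δ (1 - (δ - δ ^ 2)) + Gdelta δ (δ - δ ^ 2)) / 2
      = 3 * (1 - δ) ^ 2 / 4 := by
  rw [Gdelta_of_one_sub_le hδ₀ hδ (by linarith),
    Gdelta_of_one_sub_le hδ₀ hδ (by nlinarith),
    Gdelta_of_le_half (by nlinarith [sq_nonneg (δ - 1 / 2)])]
  field_simp
  ring

lemma Gdelta_centralized_gain_eq (hδ₀ : 0 < δ) (hδ : δ ≤ 1 / 2) :
    Gdelta δ 1 / 2 - Gdelta δ (1 / 2) = Real.log (1 / (2 * δ)) / 2 + 1 / 4 := by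
  rw [Gdelta_of_one_sub_le hδ₀ hδ (by linarith), Gdelta_of_le_half le_rfl]
  field_simp
  ring

end

/-- Unbounded Price of Anarchy for convex price functions with step demand:
for every `M > 0` there is `δ ∈ (0, 1/2)` such that, with `x*_δ = δ − δ²`
(the profit-maximizing shift), the decentralized welfare improvement
`G_δ(1)/2 − (G_δ(1−x*) + G_δ(x*))/2` is positive and the centralized welfare
improvement `G_δ(1)/2 − G_δ(1/2)` exceeds `M` times it. -/
theorem stmt5 (M : ℝ) (hM : 0 < M) :
    ∃ δ ∈ Set.Ioo (0 : ℝ) (1 / 2),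
      0 < Gdelta δ 1 / 2 -
          (Gdelta δ (1 - (δ - δ ^ 2)) + Gdelta δ (δ - δ ^ 2)) / 2 ∧
      Gdelta δ 1 / 2 - Gdelta δ (1 / 2) >
        M * (Gdelta δ 1 / 2 -
          (Gdelta δ (1 - (δ - δ ^ 2)) + Gdelta δ (δ - δ ^ 2)) / 2) := by
  set δ : ℝ := Real.exp (-(3 * M / 2)) / 2 with hδdef
  have hδ₀ : 0 < δ := by positivity
  have hδ : δ < 1 / 2 := by
    have : Real.exp (-(3 * M / 2)) < 1 := Real.exp_lt_one_iff.2 (by linarith)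
    linarith
  have hlog : Real.log (1 / (2 * δ)) = 3 * M / 2 := by
    rw [hδdef, mul_div_cancel₀ _ two_ne_zero, one_div, ← Real.exp_neg, neg_neg, Real.log_exp]
  have hsq : (1 - δ) ^ 2 < 1 := by nlinarith
  refine ⟨δ, ⟨hδ₀, hδ⟩, ?_, ?_⟩
  · rw [Gdelta_decentralized_gain_eq hδ₀ hδ.le]
    nlinarith
  · rw [Gdelta_decentralized_gain_eq hδ₀ hδ.le, Gdelta_centralized_gain_eq hδ₀ hδ.le, hlog]
    nlinarith
end

section
/- For every M > 0 there exists a polynomial P : ℝ → ℝ that is nonnegative, nondecreasing and convex on [0,1], such that, setting G(z) = ∫₀^z P(u) du, for every maximizer x* ∈ [0,1] of the function x ↦ x·(P(1−x) − P(x)) one has G(1)/2 − (G(1 − x*) + G(x*))/2 > 0 and G(1)/2 − G(1/2) > M · (G(1)/2 − (G(1 − x*) + G(x*))/2). Hence the Price of Anarchy is unbounded even over convex polynomial price functions. -/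
/-!
Take the truncated geometric series `P(z) = 1 + z + ⋯ + z^(n-1)`, a polynomial approximation of
the convex price `1/(1-z)`. Since `x·P(1-x) = 1 - (1-x)^n`, the profit `x·(P(1-x) - P(x))` equals
`1 - (1-x)^n - x·P(x)`: it is at most `1 - x`, and already at least `1 - 3x₀` at `x₀ = 2^(-k)`
when `n = k·2^k`. So the battery owner shifts at most `3·2^(-k)`.

With `G(z) = ∑ z^(j+1)/(j+1)`, twice the welfare gain of a shift `x` is
`∑ⱼ (1 - (1-x)^(j+1) - x^(j+1))/(j+1)`, whose `j`-th term is at most `min(x, 1/(j+1))`.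
Hence the decentralized gain is `O(log k)`, whereas the centralized gain, the case `x = 1/2`,
is at least `(H_n - 2)/2 ≥ (k log 2 - 2)/2`.
-/

open intervalIntegral MeasureTheory Finset Polynomial Filter Real

noncomputable def geomPoly (n : ℕ) : ℝ[X] := ∑ j ∈ range n, X ^ j

noncomputable def geomPrimitive (n : ℕ) (t : ℝ) : ℝ :=
  ∑ j ∈ range n, t ^ (j + 1) / (j + 1)

def profit (P : ℝ[X]) (x : ℝ) : ℝ := x * (P.eval (1 - x) - P.eval x)

noncomputable def welfareGain (G : ℝ → ℝ) (x : ℝ) : ℝ := G 1 / 2 - (G (1 - x) + G x) / 2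

lemma welfareGain_half (G : ℝ → ℝ) : welfareGain G (1 / 2) = G 1 / 2 - G (1 / 2) := by
  norm_num [welfareGain]

lemma pow_add_pow_le_one {x : ℝ} (hx : x ∈ Set.Icc (0 : ℝ) 1) {m : ℕ} (hm : m ≠ 0) :
    (1 - x) ^ m + x ^ m ≤ 1 := by
  have h₁ := pow_le_of_le_one (sub_nonneg.2 hx.2) (sub_le_self 1 hx.1) hm
  have h₂ := pow_le_of_le_one hx.1 hx.2 hm
  linarith

lemma cast_harmonic (n : ℕ) : (harmonic n : ℝ) = ∑ j ∈ range n, ((j : ℝ) + 1)⁻¹ := by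
  simp [harmonic]

lemma sum_Ico_inv_le_log {K n : ℕ} (hK : K ≤ n) :
    ∑ j ∈ Ico K n, ((j : ℝ) + 1)⁻¹ ≤ 1 + log n - log (K + 1) := by
  have hn := harmonic_le_one_add_log n
  have hK' := log_add_one_le_harmonic K
  rw [cast_harmonic] at hn hK'
  push_cast at hK'
  rw [sum_Ico_eq_sub _ hK]
  linarith

lemma one_sub_inv_two_pow_pow_le (k : ℕ) :
    (1 - (2 ^ k)⁻¹ : ℝ) ^ (k * 2 ^ k) ≤ (2 ^ k)⁻¹ := by
  have hbase : 0 ≤ 1 - (2 ^ k : ℝ)⁻¹ :=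
    sub_nonneg.2 (inv_le_one_of_one_le₀ (one_le_pow₀ one_le_two))
  have hexp : exp (-1) ≤ 2⁻¹ := by
    rw [exp_neg]
    exact inv_anti₀ two_pos (by linarith [add_one_le_exp 1])
  calc (1 - (2 ^ k)⁻¹ : ℝ) ^ (k * 2 ^ k) ≤ exp (-(2 ^ k)⁻¹) ^ (k * 2 ^ k) :=
        pow_le_pow_left₀ hbase (one_sub_le_exp_neg _) _
    _ = exp (-1) ^ k := by
        rw [← exp_nat_mul, ← exp_nat_mul]
        push_cast
        field_simp
    _ ≤ 2⁻¹ ^ k := pow_le_pow_left₀ (exp_nonneg _) hexp k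
    _ = (2 ^ k)⁻¹ := inv_pow 2 k

lemma eventually_mul_four_add_log_lt (M : ℝ) (hM : 0 < M) :
    ∀ᶠ k : ℕ in atTop, M * (4 + log k) < k * log 2 - 2 := by
  have hlog2 := log_pos one_lt_two
  have hlog := (isLittleO_log_id_atTop.comp_tendsto tendsto_natCast_atTop_atTop).bound
    (c := log 2 / (2 * M)) (by positivity)
  filter_upwards [hlog, tendsto_natCast_atTop_atTop.eventually_gt_atTop
    (2 * (4 * M + 2) / log 2)] with k hk hlarge
  simp only [Function.comp_apply, id, norm_natCast] at hk
  have hMlog : M * log k ≤ k * log 2 / 2 := by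
    calc M * log k ≤ M * (log 2 / (2 * M) * k) := by gcongr; exact (le_abs_self _).trans hk
      _ = k * log 2 / 2 := by field_simp
  rw [div_lt_iff₀ hlog2] at hlarge
  linarith

lemma one_sub_pow_sub_pow_div_le_self {x : ℝ} (hx : x ∈ Set.Icc (0 : ℝ) 1) (j : ℕ) :
    (1 - (1 - x) ^ (j + 1) - x ^ (j + 1)) / (j + 1) ≤ x := by
  have hbernoulli := one_add_mul_le_pow (a := -x) (by linarith [hx.2]) (j + 1)
  rw [← sub_eq_add_neg] at hbernoulli
  push_cast at hbernoulli
  rw [div_le_iff₀ (by positivity)]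
  nlinarith [pow_nonneg hx.1 (j + 1)]

lemma one_sub_pow_sub_pow_div_le_inv {x : ℝ} (hx : x ∈ Set.Icc (0 : ℝ) 1) (j : ℕ) :
    (1 - (1 - x) ^ (j + 1) - x ^ (j + 1)) / (j + 1) ≤ ((j : ℝ) + 1)⁻¹ := by
  rw [div_eq_mul_inv]
  refine mul_le_of_le_one_left (by positivity) ?_
  linarith [pow_nonneg hx.1 (j + 1), pow_nonneg (sub_nonneg.2 hx.2) (j + 1)]

section geomPoly

variable (n : ℕ)

@[simp]
lemma eval_geomPoly (z : ℝ) : (geomPoly n).eval z = ∑ j ∈ range n, z ^ j := by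
  simp [geomPoly, eval_finsetSum]

lemma integral_eval_geomPoly (t : ℝ) :
    ∫ u in (0 : ℝ)..t, (geomPoly n).eval u = geomPrimitive n t := by
  simp only [eval_geomPoly]
  rw [integral_finsetSum fun j _ => (continuous_pow j).intervalIntegrable 0 t]
  refine sum_congr rfl fun j _ => ?_
  simp [integral_pow]

lemma eval_geomPoly_nonneg {z : ℝ} (hz : 0 ≤ z) : 0 ≤ (geomPoly n).eval z := by
  rw [eval_geomPoly]
  exact sum_nonneg fun j _ => pow_nonneg hz j

lemma monotoneOn_eval_geomPoly : MonotoneOn (fun z => (geomPoly n).eval z) (Set.Ici 0) :=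
  fun z hz _ _ hzy => by
    simp only [eval_geomPoly]
    exact sum_le_sum fun j _ => pow_le_pow_left₀ hz hzy j

lemma convexOn_eval_geomPoly : ConvexOn ℝ (Set.Ici 0) (fun z => (geomPoly n).eval z) := by
  simp only [eval_geomPoly]
  induction n with
  | zero => simpa using convexOn_const (0 : ℝ) (convex_Ici 0)
  | succ m ih =>
    simp only [sum_range_succ]
    exact ih.add (convexOn_pow m)

lemma profit_geomPoly (x : ℝ) :
    profit (geomPoly n) x = 1 - (1 - x) ^ n - x * (geomPoly n).eval x := by
  have hgeom : x * (geomPoly n).eval (1 - x) = 1 - (1 - x) ^ n := by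
    rw [eval_geomPoly]
    linear_combination -(geom_sum_mul (1 - x) n)
  rw [profit, mul_sub, hgeom]

variable {n}

lemma profit_geomPoly_le (hn : n ≠ 0) {x : ℝ} (hx : x ∈ Set.Icc (0 : ℝ) 1) :
    profit (geomPoly n) x ≤ 1 - x := by
  have hP : 1 ≤ (geomPoly n).eval x := by
    rw [eval_geomPoly]
    simpa using
      single_le_sum (fun j _ => pow_nonneg hx.1 j) (mem_range.2 (Nat.pos_of_ne_zero hn))
  rw [profit_geomPoly]
  linarith [pow_nonneg (sub_nonneg.2 hx.2) n, mul_le_mul_of_nonneg_left hP hx.1]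

lemma sub_two_mul_le_profit_geomPoly {x : ℝ} (hx₀ : 0 ≤ x) (hx : x ≤ 1 / 2) :
    1 - (1 - x) ^ n - 2 * x ≤ profit (geomPoly n) x := by
  have hP : (geomPoly n).eval x ≤ 2 := by
    rw [eval_geomPoly, range_eq_Ico]
    calc _ ≤ x ^ 0 / (1 - x) := geom_sum_Ico_le_of_lt_one hx₀ (by linarith)
      _ ≤ 2 := by rw [pow_zero, div_le_iff₀ (by linarith)]; linarith
  rw [profit_geomPoly]
  linarith [mul_le_mul_of_nonneg_left hP hx₀]

lemma maximizer_profit_geomPoly_mem_Ioc (hn : n ≠ 0) {x₀ : ℝ} (hx₀ : 0 < x₀)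
    (hx₀3 : x₀ < 1 / 3) (hdecay : (1 - x₀) ^ n ≤ x₀) {x : ℝ}
    (hx : x ∈ Set.Icc (0 : ℝ) 1)
    (hmax : ∀ y ∈ Set.Icc (0 : ℝ) 1, profit (geomPoly n) y ≤ profit (geomPoly n) x) :
    x ∈ Set.Ioc 0 (3 * x₀) := by
  have hlow := (sub_two_mul_le_profit_geomPoly hx₀.le (by linarith)).trans
    (hmax x₀ ⟨hx₀.le, by linarith⟩)
  refine ⟨lt_of_le_of_ne hx.1 fun h => ?_, ?_⟩
  · rw [← h, profit, zero_mul] at hlow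
    linarith
  · linarith [profit_geomPoly_le hn hx]

lemma two_mul_welfareGain_geomPrimitive (x : ℝ) :
    2 * welfareGain (geomPrimitive n) x =
      ∑ j ∈ range n, (1 - (1 - x) ^ (j + 1) - x ^ (j + 1)) / (j + 1) := by
  simp only [welfareGain, geomPrimitive, one_pow, sub_div, sum_sub_distrib]
  ring

lemma welfareGain_geomPrimitive_pos (hn : 2 ≤ n) {x : ℝ} (hx : x ∈ Set.Ioo (0 : ℝ) 1) :
    0 < welfareGain (geomPrimitive n) x := by
  have hterm : ∀ j ∈ range n, 0 ≤ (1 - (1 - x) ^ (j + 1) - x ^ (j + 1)) / (j + 1) := by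
    intro j _
    have := pow_add_pow_le_one (Set.Ioo_subset_Icc_self hx) (m := j + 1) j.succ_ne_zero
    exact div_nonneg (by linarith) (by positivity)
  have hone := single_le_sum hterm (mem_range.2 hn)
  have hterm_one : (1 - (1 - x) ^ (1 + 1) - x ^ (1 + 1)) / ((1 : ℕ) + 1 : ℝ) = x * (1 - x) := by
    norm_num
    ring
  rw [← two_mul_welfareGain_geomPrimitive, hterm_one] at hone
  linarith [mul_pos hx.1 (sub_pos.2 hx.2)]

lemma two_mul_welfareGain_geomPrimitive_le {x : ℝ} (hx : x ∈ Set.Icc (0 : ℝ) 1) {K : ℕ}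
    (hK : K ≤ n) :
    2 * welfareGain (geomPrimitive n) x ≤ K * x + ∑ j ∈ Ico K n, ((j : ℝ) + 1)⁻¹ := by
  rw [two_mul_welfareGain_geomPrimitive, ← sum_range_add_sum_Ico _ hK]
  gcongr with j _ j _
  · calc ∑ j ∈ range K, (1 - (1 - x) ^ (j + 1) - x ^ (j + 1)) / (j + 1)
        ≤ ∑ _j ∈ range K, x := sum_le_sum fun j _ => one_sub_pow_sub_pow_div_le_self hx j
      _ = K * x := by rw [sum_const, card_range, nsmul_eq_mul]
  · exact one_sub_pow_sub_pow_div_le_inv hx j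

lemma harmonic_sub_two_le_two_mul_welfareGain_half :
    (harmonic n : ℝ) - 2 ≤ 2 * welfareGain (geomPrimitive n) (1 / 2) := by
  have hterm (j : ℕ) : ((j : ℝ) + 1)⁻¹ - (1 / 2) ^ j ≤
      (1 - (1 - 1 / 2) ^ (j + 1) - (1 / 2 : ℝ) ^ (j + 1)) / (j + 1) := by
    have hle : (1 / 2 : ℝ) ^ j / (j + 1) ≤ (1 / 2) ^ j :=
      div_le_self (by positivity) (by simp)
    have heq : (1 - (1 - 1 / 2) ^ (j + 1) - (1 / 2 : ℝ) ^ (j + 1)) / (j + 1) =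
        ((j : ℝ) + 1)⁻¹ - (1 / 2) ^ j / (j + 1) := by
      field_simp
      ring
    linarith
  calc (harmonic n : ℝ) - 2 ≤ ∑ j ∈ range n, (((j : ℝ) + 1)⁻¹ - (1 / 2) ^ j) := by
        rw [sum_sub_distrib, cast_harmonic]
        linarith [sum_geometric_two_le n]
    _ ≤ _ := by
        rw [two_mul_welfareGain_geomPrimitive]
        exact sum_le_sum fun j _ => hterm j

end geomPoly

lemma two_mul_welfareGain_le_four_add_log {k : ℕ} (hk : k ≠ 0) {x : ℝ}
    (hx : x ∈ Set.Icc (0 : ℝ) 1) (hx3 : x ≤ 3 * (2 ^ k)⁻¹) :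
    2 * welfareGain (geomPrimitive (k * 2 ^ k)) x ≤ 4 + log k := by
  have hK : 2 ^ k ≤ k * 2 ^ k := Nat.le_mul_of_pos_left _ (Nat.pos_of_ne_zero hk)
  have hshift : ((2 ^ k : ℕ) : ℝ) * x ≤ 3 := by
    push_cast
    calc (2 : ℝ) ^ k * x ≤ 2 ^ k * (3 * (2 ^ k)⁻¹) := by gcongr
      _ = 3 := by field_simp
  have hlog : log ((k * 2 ^ k : ℕ) : ℝ) - log ((2 ^ k : ℕ) + 1 : ℝ) ≤ log k := by
    push_cast
    rw [log_mul (by exact_mod_cast hk) (by positivity)]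
    linarith [log_le_log (by positivity) (le_add_of_nonneg_right zero_le_one :
      (2 : ℝ) ^ k ≤ 2 ^ k + 1)]
  linarith [two_mul_welfareGain_geomPrimitive_le hx hK, sum_Ico_inv_le_log hK]

lemma mul_log_two_sub_two_le_two_mul_welfareGain_half (k : ℕ) :
    k * log 2 - 2 ≤ 2 * welfareGain (geomPrimitive (k * 2 ^ k)) (1 / 2) := by
  have hH := log_add_one_le_harmonic (k * 2 ^ k)
  have hn : (2 : ℝ) ^ k ≤ ((k * 2 ^ k + 1 : ℕ) : ℝ) := by
    rcases k.eq_zero_or_pos with rfl | hk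
    · simp
    · exact_mod_cast (Nat.le_mul_of_pos_left _ hk).trans (Nat.le_succ _)
  have hlog := log_le_log (by positivity) hn
  rw [log_pow] at hlog
  linarith [harmonic_sub_two_le_two_mul_welfareGain_half (n := k * 2 ^ k)]

/-- Unbounded Price of Anarchy even for convex polynomial price functions:
for every `M > 0` there is a polynomial `P` that is nonnegative, nondecreasing
and convex on `[0,1]` such that, with `G(z) = ∫₀^z P(u) du`, every maximizer
`x* ∈ [0,1]` of the profit `x ↦ x·(P(1−x) − P(x))` yields a positive
decentralized welfare improvement `G(1)/2 − (G(1−x*) + G(x*))/2` that is less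
than `1/M` times the centralized improvement `G(1)/2 − G(1/2)`. -/
theorem stmt6 (M : ℝ) (hM : 0 < M) :
    ∃ P : Polynomial ℝ,
      (∀ z ∈ Set.Icc (0 : ℝ) 1, 0 ≤ P.eval z) ∧
      MonotoneOn (fun z => P.eval z) (Set.Icc (0 : ℝ) 1) ∧
      ConvexOn ℝ (Set.Icc (0 : ℝ) 1) (fun z => P.eval z) ∧
      ∀ xstar ∈ Set.Icc (0 : ℝ) 1,
        (∀ x ∈ Set.Icc (0 : ℝ) 1,
          x * (P.eval (1 - x) - P.eval x) ≤
            xstar * (P.eval (1 - xstar) - P.eval xstar)) →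
        0 < (∫ u in (0:ℝ)..1, P.eval u) / 2 -
            ((∫ u in (0:ℝ)..(1 - xstar), P.eval u) +
              (∫ u in (0:ℝ)..xstar, P.eval u)) / 2 ∧
        (∫ u in (0:ℝ)..1, P.eval u) / 2 - (∫ u in (0:ℝ)..(1/2 : ℝ), P.eval u) >
          M * ((∫ u in (0:ℝ)..1, P.eval u) / 2 -
            ((∫ u in (0:ℝ)..(1 - xstar), P.eval u) +
              (∫ u in (0:ℝ)..xstar, P.eval u)) / 2) := by
  obtain ⟨k, hkM, hk⟩ :=
    ((eventually_mul_four_add_log_lt M hM).and (eventually_ge_atTop 2)).exists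
  have hn : k * 2 ^ k ≠ 0 := by positivity
  refine ⟨geomPoly (k * 2 ^ k), fun z hz => eval_geomPoly_nonneg _ hz.1,
    (monotoneOn_eval_geomPoly _).mono Set.Icc_subset_Ici_self,
    (convexOn_eval_geomPoly _).subset Set.Icc_subset_Ici_self (convex_Icc 0 1),
    fun x hx hmax => ?_⟩
  have hx₀ : (2 ^ k : ℝ)⁻¹ < 1 / 3 := by
    rw [one_div, inv_lt_inv₀ (by positivity) (by norm_num)]
    calc (3 : ℝ) < 2 ^ 2 := by norm_num
      _ ≤ 2 ^ k := pow_le_pow_right₀ one_le_two hk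
  obtain ⟨hx_pos, hx_le⟩ := maximizer_profit_geomPoly_mem_Ioc hn (by positivity) hx₀
    (one_sub_inv_two_pow_pow_le k) hx hmax
  have hn2 : 2 ≤ k * 2 ^ k := le_mul_of_le_of_one_le hk (Nat.one_le_two_pow)
  have hdec := two_mul_welfareGain_le_four_add_log (by omega) hx hx_le
  have hcen := mul_log_two_sub_two_le_two_mul_welfareGain_half k
  simp only [integral_eval_geomPoly, ← welfareGain_half]
  refine ⟨welfareGain_geomPrimitive_pos hn2 ⟨hx_pos, by linarith⟩, ?_⟩
  change M * welfareGain _ x < _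
  linarith [mul_le_mul_of_nonneg_left hdec hM.le]
end

section
/- Let d be a positive integer and ε ∈ (0, 1/2). Define f(x) = x·((1−x)^d − (εx/(1−ε))^d) for x ∈ [0,1]. Then: (i) every maximizer x* of f on [0,1] satisfies x* ≤ 1/(d+1); and (ii) for every such maximizer x*, the welfare improvements W_CB = ε − ε^{d+1} and W_DCB = ε − ε·(1 − x*)^{d+1} − (1−ε)·(εx*/(1−ε))^{d+1} satisfy W_DCB > 0 and W_CB · (1 − (d/(d+1))^{d+1}) ≥ (1 − ε^d) · W_DCB; in particular W_CB / W_DCB ≥ (1 − ε^d) / (1 − (d/(d+1))^{d+1}). -/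
/-!
Write `c = ε / (1 - ε)`, so that `f x = x (1 - x)^d - c^d x^(d+1)`. By Bernoulli's inequality the
first term is maximal on `x ≤ 1` at `x₀ = 1/(d+1)`, while the second is strictly decreasing, so no
maximizer exceeds `x₀`; since `f x₀ > 0 = f 0`, a maximizer is also positive. With `y = c x*` the
off-peak term `(1 - ε) y^(d+1)` equals `ε x* y^d < ε x*`, which gives `W_DCB > 0`, and
`1 - x* ≥ d/(d+1)` gives `W_DCB ≤ ε (1 - (d/(d+1))^(d+1))`, whereas `W_CB = ε (1 - ε^d)`.
-/

open Set

/-- The revenue `f` with `c = ε / (1 - ε)`, so that `c x` is the off-peak charging rate. -/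
noncomputable def stepRevenue (d : ℕ) (c x : ℝ) : ℝ := x * ((1 - x) ^ d - (c * x) ^ d)

lemma stepRevenue_eq (d : ℕ) (c x : ℝ) :
    stepRevenue d c x = x * (1 - x) ^ d - c ^ d * x ^ (d + 1) := by
  rw [stepRevenue, mul_pow, pow_succ]
  ring

lemma mul_one_sub_pow_le_inv_succ (d : ℕ) {x : ℝ} (hx : x ≤ 1) :
    x * (1 - x) ^ d ≤ 1 / (d + 1) * (1 - 1 / (d + 1)) ^ d := by
  rcases Nat.eq_zero_or_pos d with rfl | hd
  · simpa using hx
  have hd' : (0 : ℝ) < d := by exact_mod_cast hd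
  have hinv : 1 / ((d : ℝ) + 1) ≤ 1 := by bound
  have bernoulli := pow_add_mul_le_add_pow (a := 1 - x) (b := x - 1 / (d + 1))
    (by linarith) (by linarith) (d + 1)
  have lhs : (1 - x) ^ (d + 1) + ((d + 1 : ℕ) : ℝ) * (1 - x) ^ (d + 1 - 1) * (x - 1 / (d + 1))
      = d * (x * (1 - x) ^ d) := by
    rw [Nat.add_sub_cancel, pow_succ]
    push_cast
    field_simp
    ring
  have rhs : (1 - x + (x - 1 / (d + 1))) ^ (d + 1) = d * (1 / (d + 1) * (1 - 1 / (d + 1)) ^ d) := by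
    rw [pow_succ]
    field_simp
    ring
  rw [lhs, rhs] at bernoulli
  exact le_of_mul_le_mul_left bernoulli hd'

lemma stepRevenue_lt_of_inv_succ_lt {d : ℕ} {c x : ℝ} (hc : 0 < c) (hx₀ : 1 / (d + 1) < x)
    (hx₁ : x ≤ 1) : stepRevenue d c x < stepRevenue d c (1 / (d + 1)) := by
  have hpow : (1 / (d + 1) : ℝ) ^ (d + 1) < x ^ (d + 1) :=
    pow_lt_pow_left₀ hx₀ (by positivity) (Nat.succ_ne_zero d)
  rw [stepRevenue_eq, stepRevenue_eq]
  nlinarith [mul_one_sub_pow_le_inv_succ d hx₁, mul_lt_mul_of_pos_left hpow (pow_pos hc d)]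

lemma stepRevenue_inv_succ_pos {d : ℕ} {c : ℝ} (hc₀ : 0 ≤ c) (hcd : c < d) :
    0 < stepRevenue d c (1 / (d + 1)) := by
  have hd : d ≠ 0 := by rintro rfl; simp at hcd; linarith
  have hx₀ : (0 : ℝ) < 1 / (d + 1) := by positivity
  have hlt : c * (1 / (d + 1)) < 1 - 1 / (d + 1) := by
    rw [one_sub_div (by positivity), add_sub_cancel_right, mul_one_div]
    gcongr
  exact mul_pos hx₀ (sub_pos.mpr (pow_lt_pow_left₀ hlt (by positivity) hd))

lemma mem_Ioc_of_isMaxOn_stepRevenue {d : ℕ} {c x : ℝ} (hc₀ : 0 < c) (hcd : c < d)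
    (hx : x ∈ Icc 0 1) (hmax : IsMaxOn (stepRevenue d c) (Icc (0 : ℝ) 1) x) :
    x ∈ Ioc 0 (1 / ((d : ℝ) + 1)) := by
  have hx₀ : (1 / (d + 1) : ℝ) ∈ Icc 0 1 := ⟨by positivity, by bound⟩
  have hle := isMaxOn_iff.mp hmax _ hx₀
  refine ⟨hx.1.lt_of_ne ?_, le_of_not_gt fun hlt => ?_⟩
  · rintro rfl
    have h0 : stepRevenue d c 0 = 0 := by simp [stepRevenue]
    linarith [stepRevenue_inv_succ_pos (d := d) hc₀.le hcd]
  · linarith [stepRevenue_lt_of_inv_succ_lt hc₀ hlt hx.2]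

section Welfare

variable {d : ℕ} {ε x y : ℝ}

lemma welfare_pos_of_mul_eq (hd : d ≠ 0) (hε : 0 < ε) (hx₀ : 0 < x) (hx₁ : x ≤ 1) (hy₀ : 0 ≤ y)
    (hy₁ : y < 1) (hxy : (1 - ε) * y = ε * x) :
    0 < ε - ε * (1 - x) ^ (d + 1) - (1 - ε) * y ^ (d + 1) := by
  have offPeak : (1 - ε) * y ^ (d + 1) = ε * x * y ^ d := by
    rw [pow_succ, mul_comm _ y, ← mul_assoc, hxy]
  have onPeak : (1 - x) ^ (d + 1) ≤ 1 - x :=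
    pow_le_of_le_one (by linarith) (by linarith) (Nat.succ_ne_zero d)
  have hyd : y ^ d < 1 := pow_lt_one₀ hy₀ hy₁ hd
  rw [offPeak]
  nlinarith [mul_pos (mul_pos hε hx₀) (sub_pos.mpr hyd), mul_le_mul_of_nonneg_left onPeak hε.le]

lemma welfare_le_of_le_inv_succ (hε₀ : 0 ≤ ε) (hε₁ : ε ≤ 1) (hy : 0 ≤ y) (hx : x ≤ 1 / (d + 1)) :
    ε - ε * (1 - x) ^ (d + 1) - (1 - ε) * y ^ (d + 1) ≤
      ε * (1 - ((d : ℝ) / (d + 1)) ^ (d + 1)) := by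
  have hsub : (d : ℝ) / (d + 1) ≤ 1 - x := by
    have : (d : ℝ) / (d + 1) = 1 - 1 / (d + 1) := by field_simp; ring
    linarith
  have hpow := pow_le_pow_left₀ (by positivity) hsub (d + 1)
  nlinarith [mul_le_mul_of_nonneg_left hpow hε₀,
    mul_nonneg (sub_nonneg.mpr hε₁) (pow_nonneg hy (d + 1))]

end Welfare

/-- Lower bound construction for monomial prices of degree `d`: with demand 1
on `[0,ε]` and 0 on `(ε,1]`, price `P(z) = (d+1)z^d` and revenue proportional
to `f(x) = x·((1−x)^d − (εx/(1−ε))^d)`: (i) every maximizer `x*` of `f` on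
`[0,1]` satisfies `x* ≤ 1/(d+1)`; (ii) the welfare improvements
`W_CB = ε − ε^{d+1}` and `W_DCB = ε − ε(1−x*)^{d+1} − (1−ε)(εx*/(1−ε))^{d+1}`
satisfy `W_DCB > 0` and `W_CB·(1 − (d/(d+1))^{d+1}) ≥ (1 − ε^d)·W_DCB`, hence
`W_CB/W_DCB ≥ (1 − ε^d)/(1 − (d/(d+1))^{d+1})`. -/
theorem stmt18 (d : ℕ) (hd : 0 < d)
    (ε : ℝ) (hε : ε ∈ Set.Ioo (0 : ℝ) (1 / 2))
    (f : ℝ → ℝ)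
    (hf : ∀ x, f x = x * ((1 - x) ^ d - (ε * x / (1 - ε)) ^ d))
    (xstar : ℝ) (hxs : xstar ∈ Set.Icc (0 : ℝ) 1)
    (hmax : ∀ x ∈ Set.Icc (0 : ℝ) 1, f x ≤ f xstar) :
    xstar ≤ 1 / ((d : ℝ) + 1) ∧
    0 < ε - ε * (1 - xstar) ^ (d + 1) - (1 - ε) * (ε * xstar / (1 - ε)) ^ (d + 1) ∧
    (ε - ε ^ (d + 1)) * (1 - ((d : ℝ) / ((d : ℝ) + 1)) ^ (d + 1)) ≥
      (1 - ε ^ d) *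
        (ε - ε * (1 - xstar) ^ (d + 1) - (1 - ε) * (ε * xstar / (1 - ε)) ^ (d + 1)) ∧
    (ε - ε ^ (d + 1)) /
        (ε - ε * (1 - xstar) ^ (d + 1) - (1 - ε) * (ε * xstar / (1 - ε)) ^ (d + 1)) ≥
      (1 - ε ^ d) / (1 - ((d : ℝ) / ((d : ℝ) + 1)) ^ (d + 1)) := by
  obtain ⟨hε₀, hε₁⟩ := hε
  have hc₀ : 0 < ε / (1 - ε) := div_pos hε₀ (by linarith)
  have hc₁ : ε / (1 - ε) < 1 := (div_lt_one (by linarith)).mpr (by linarith)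
  have hcd : ε / (1 - ε) < d := hc₁.trans_le (Nat.one_le_cast.mpr hd)
  have hfc : f = stepRevenue d (ε / (1 - ε)) :=
    funext fun x => by rw [hf, stepRevenue, mul_div_right_comm]
  subst hfc
  obtain ⟨hx₀, hx₁⟩ := mem_Ioc_of_isMaxOn_stepRevenue hc₀ hcd hxs (isMaxOn_iff.mpr hmax)
  set y := ε * xstar / (1 - ε)
  have hy₀ : 0 ≤ y := div_nonneg (mul_nonneg hε₀.le hxs.1) (by linarith)
  have hy₁ : y < 1 :=
    (mul_div_right_comm _ _ _).trans_lt ((mul_le_of_le_one_right hc₀.le hxs.2).trans_lt hc₁)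
  have hxy : (1 - ε) * y = ε * xstar := mul_div_cancel₀ _ (by linarith)
  have hW := welfare_pos_of_mul_eq hd.ne' hε₀ hx₀ hxs.2 hy₀ hy₁ hxy
  have hWle := welfare_le_of_le_inv_succ (d := d) hε₀.le (by linarith) hy₀ hx₁
  have hK : ((d : ℝ) / (d + 1)) ^ (d + 1) < 1 :=
    pow_lt_one₀ (by positivity) ((div_lt_one (by positivity)).mpr (by linarith))
      (Nat.succ_ne_zero d)
  have hεd : ε ^ d ≤ 1 := pow_le_one₀ hε₀.le (by linarith)
  have hratio : (ε - ε ^ (d + 1)) * (1 - ((d : ℝ) / (d + 1)) ^ (d + 1)) ≥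
      (1 - ε ^ d) * (ε - ε * (1 - xstar) ^ (d + 1) - (1 - ε) * y ^ (d + 1)) :=
    calc (1 - ε ^ d) * (ε - ε * (1 - xstar) ^ (d + 1) - (1 - ε) * y ^ (d + 1))
        ≤ (1 - ε ^ d) * (ε * (1 - ((d : ℝ) / (d + 1)) ^ (d + 1))) :=
          mul_le_mul_of_nonneg_left hWle (sub_nonneg.mpr hεd)
      _ = (ε - ε ^ (d + 1)) * (1 - ((d : ℝ) / (d + 1)) ^ (d + 1)) := by ring
  refine ⟨hx₁, hW, hratio, ?_⟩
  rw [ge_iff_le, div_le_div_iff₀ (sub_pos.mpr hK) hW]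
  linarith
end
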